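/- (Otto's theorem.) Every FO-formula φ(x) of quantifier rank q over the signature consisting of one binary predicate R and unary predicates that is invariant under bisimulations (with respect to the set σ of propositional variables whose unary predicates occur in φ) is logically equivalent to the standard translation of an ML-formula of modal depth at most 2^q − 1. -/

import Mathlib

open FirstOrder

/-! ### Modal logic -/

/-- Formulas of propositional modal logic ML. -/
inductive ML : Type
  | top : ML
  | var : ℕ → ML
  | and : ML → ML → ML
  | not : ML → ML
  | dia : ML → ML

/-- A Kripke model. -/
structure Kripke : Type 1 where
  W : Type
  nonempty : Nonempty W
  R : W → W → Prop
  V : ℕ → Set W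

/-- Truth of an ML-formula at a world of a Kripke model. -/
def ML.sat (M : Kripke) : M.W → ML → Prop
  | _, .top => True
  | w, .var p => w ∈ M.V p
  | w, .and φ ψ => ML.sat M w φ ∧ ML.sat M w ψ
  | w, .not φ => ¬ ML.sat M w φ
  | w, .dia φ => ∃ v, M.R w v ∧ ML.sat M v φ

/-- `β` is a `σ`-bisimulation between the Kripke models `M₁` and `M₂`. -/
def IsBisimulation (σ : Set ℕ) (M₁ M₂ : Kripke) (β : M₁.W → M₂.W → Prop) : Prop :=
  ∀ u₁ u₂, β u₁ u₂ →
    (∀ p ∈ σ, (u₁ ∈ M₁.V p ↔ u₂ ∈ M₂.V p)) ∧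
    (∀ v₁, M₁.R u₁ v₁ → ∃ v₂, M₂.R u₂ v₂ ∧ β v₁ v₂) ∧
    (∀ v₂, M₂.R u₂ v₂ → ∃ v₁, M₁.R u₁ v₁ ∧ β v₁ v₂)

/-- `σ`-bisimilarity of pointed Kripke models. -/
def Bisimilar (σ : Set ℕ) (M₁ M₂ : Kripke) (w₁ : M₁.W) (w₂ : M₂.W) : Prop :=
  ∃ β : M₁.W → M₂.W → Prop, IsBisimulation σ M₁ M₂ β ∧ β w₁ w₂

/-! ### The first-order signature of one binary predicate `R` and unary predicates -/

/-- Relation symbols: for each propositional variable `p : ℕ` a unary predicate,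
and one binary predicate `R`. -/
def ModalRel : ℕ → Type
  | 0 => Empty
  | 1 => ℕ
  | 2 => Unit
  | _ + 3 => Empty

/-- The first-order language with one binary predicate and unary predicates `p : ℕ`. -/
def modalLang : FirstOrder.Language := ⟨fun _ => Empty, ModalRel⟩

/-- A Kripke model regarded as a `modalLang`-structure. -/
instance Kripke.toStructure (M : Kripke) : modalLang.Structure M.W where
  funMap := fun f _ => Empty.elim f
  RelMap := fun {n} r =>
    match n, r with
    | 1, p => fun v => v 0 ∈ M.V p
    | 2, _ => fun v => M.R (v 0) (v 1)

/-- Auxiliary standard translation: the free variable is the last bound variable. -/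
def ML.stAux : ML → (k : ℕ) → modalLang.BoundedFormula Empty (k + 1)
  | .top, k =>
      Language.BoundedFormula.equal
        (Language.Term.var (Sum.inr (Fin.last k))) (Language.Term.var (Sum.inr (Fin.last k)))
  | .var p, k =>
      Language.BoundedFormula.rel (l := 1) (show modalLang.Relations 1 from p)
        ![Language.Term.var (Sum.inr (Fin.last k))]
  | .and φ ψ, k => (ML.stAux φ k) ⊓ (ML.stAux ψ k)
  | .not φ, k => (ML.stAux φ k).not
  | .dia φ, k =>
      Language.BoundedFormula.ex
        ((Language.BoundedFormula.rel (l := 2) (show modalLang.Relations 2 from ())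
            ![Language.Term.var (Sum.inr (Fin.last k).castSucc),
              Language.Term.var (Sum.inr (Fin.last (k + 1)))]) ⊓
          (ML.stAux φ (k + 1)))

/-- The standard translation of an ML-formula: a first-order formula in one free variable. -/
def ML.st (φ : ML) : modalLang.Formula (Fin 1) :=
  (φ.stAux 0).toFormula.relabel (Sum.elim Empty.elim id)

/-- The propositional variables corresponding to a relation symbol. -/
def relVars : ∀ {l : ℕ}, ModalRel l → Set ℕ
  | 1, p => {p}
  | 0, r => Empty.elim r
  | 2, _ => ∅
  | _ + 3, r => Empty.elim r

/-- The set of propositional variables whose unary predicates occur in a formula. -/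
def unarySyms {α : Type} : ∀ {n : ℕ}, modalLang.BoundedFormula α n → Set ℕ
  | _, .falsum => ∅
  | _, .equal _ _ => ∅
  | _, .rel r _ => relVars r
  | _, .imp f g => unarySyms f ∪ unarySyms g
  | _, .all f => unarySyms f

/-- The quantifier rank of a first-order formula. -/
def qr {α : Type} : ∀ {n : ℕ}, modalLang.BoundedFormula α n → ℕ
  | _, .falsum => 0
  | _, .equal _ _ => 0
  | _, .rel _ _ => 0
  | _, .imp f g => max (qr f) (qr g)
  | _, .all f => qr f + 1

/-- The modal depth of an ML-formula. -/
def ML.depth : ML → ℕ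
  | .top => 0
  | .var _ => 0
  | .and φ ψ => max φ.depth ψ.depth
  | .not φ => φ.depth
  | .dia φ => φ.depth + 1

/-!
Let `n = 2 ^ q - 1`. By bisimulation invariance, `φ` holds at `(M, u)` iff it holds at the root
of a full copy of the unravelling of `M` at `u`, inside a model consisting of countably many
full copies and countably many copies cut off at depth `n`. Duplicator wins the `q`-round
Ehrenfeucht–Fraïssé game between that root and the root of a truncated copy: with `r` rounds
left, a pebble within distance `2 ^ r` of an earlier one is answered by the same walk in the
copy matching the earlier one, any other pebble by the same walk in a fresh copy of the same
kind. So `φ` cannot tell the two roots apart. Truncated unravellings of worlds with the same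
depth-`n` Hintikka type are bisimilar, hence `φ` only depends on that type; as there are finitely
many types, `φ` is equivalent to the disjunction of the characteristic formulas of the types of
its models.
-/

open FirstOrder Language

namespace Kripke

variable {M N : Kripke}

def IsPartialIso (P : Set (M.W × N.W)) : Prop :=
  (∀ p ∈ P, ∀ x, p.1 ∈ M.V x ↔ p.2 ∈ N.V x) ∧
    ∀ p ∈ P, ∀ q ∈ P, (p.1 = q.1 ↔ p.2 = q.2) ∧ (M.R p.1 q.1 ↔ N.R p.2 q.2)

/-- `I r P` says that the finite set `P` of pebble pairs is a winning position for Duplicator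
in the Ehrenfeucht–Fraïssé game with `r` rounds left. -/
structure IsBackForth (I : ℕ → Set (M.W × N.W) → Prop) : Prop where
  isPartialIso : ∀ r P, I r P → IsPartialIso P
  forth : ∀ r P, P.Finite → I (r + 1) P → ∀ a, ∃ b, I r (insert (a, b) P)
  back : ∀ r P, P.Finite → I (r + 1) P → ∀ b, ∃ a, I r (insert (a, b) P)

end Kripke

theorem modalLang.term_eq_var {α : Type*} (t : modalLang.Term α) : ∃ s, t = Term.var s := by
  cases t with
  | var s => exact ⟨s, rfl⟩
  | func f _ => exact f.elim

theorem range_sumElim_snoc {α β γ : Type*} {k : ℕ} (v : α → β) (w : α → γ)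
    (xs : Fin k → β) (ys : Fin k → γ) (a : β) (b : γ) :
    Set.range (fun i => (Sum.elim v (Fin.snoc xs a : Fin (k + 1) → β) i,
        Sum.elim w (Fin.snoc ys b : Fin (k + 1) → γ) i)) =
      insert (a, b) (Set.range fun i => (Sum.elim v xs i, Sum.elim w ys i)) := by
  ext p
  simp only [Set.mem_range, Set.mem_insert_iff, Sum.exists, Sum.elim_inl, Sum.elim_inr,
    Fin.exists_fin_succ', Fin.snoc_castSucc, Fin.snoc_last]
  tauto

namespace Kripke.IsBackForth

variable {M N : Kripke} {I : ℕ → Set (M.W × N.W) → Prop}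

theorem realize_boundedFormula_iff (hI : IsBackForth I) {α : Type} [Finite α] {k : ℕ}
    (ψ : modalLang.BoundedFormula α k) {m : ℕ} (hm : qr ψ ≤ m)
    (v : α → M.W) (w : α → N.W) (xs : Fin k → M.W) (ys : Fin k → N.W)
    (h : I m (Set.range fun i => (Sum.elim v xs i, Sum.elim w ys i))) :
    ψ.Realize v xs ↔ ψ.Realize w ys := by
  induction ψ generalizing m with
  | falsum => exact Iff.rfl
  | equal t₁ t₂ =>
    obtain ⟨s₁, rfl⟩ := modalLang.term_eq_var t₁
    obtain ⟨s₂, rfl⟩ := modalLang.term_eq_var t₂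
    exact ((hI.isPartialIso m _ h).2 _ ⟨s₁, rfl⟩ _ ⟨s₂, rfl⟩).1
  | @rel _ l r ts =>
    have hP := hI.isPartialIso m _ h
    match l, r with
    | 1, p =>
      obtain ⟨s, hs⟩ := modalLang.term_eq_var (ts 0)
      show (ts 0).realize _ ∈ M.V p ↔ (ts 0).realize _ ∈ N.V p
      rw [hs]
      exact hP.1 _ ⟨s, rfl⟩ p
    | 2, _ =>
      obtain ⟨s₀, hs₀⟩ := modalLang.term_eq_var (ts 0)
      obtain ⟨s₁, hs₁⟩ := modalLang.term_eq_var (ts 1)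
      show M.R ((ts 0).realize _) ((ts 1).realize _) ↔ N.R ((ts 0).realize _) ((ts 1).realize _)
      rw [hs₀, hs₁]
      exact (hP.2 _ ⟨s₀, rfl⟩ _ ⟨s₁, rfl⟩).2
  | imp f g ihf ihg =>
    exact imp_congr (ihf (le_of_max_le_left hm) xs ys h) (ihg (le_of_max_le_right hm) xs ys h)
  | all f ih =>
    simp only [qr] at hm
    obtain ⟨m, rfl⟩ : ∃ m', m = m' + 1 := ⟨m - 1, by omega⟩
    have hfin := Set.finite_range fun i => (Sum.elim v xs i, Sum.elim w ys i)
    refine ⟨fun hx b => ?_, fun hy a => ?_⟩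
    · obtain ⟨a, ha⟩ := hI.back m _ hfin h b
      rw [← range_sumElim_snoc] at ha
      exact (ih (by omega) _ _ ha).mp (hx a)
    · obtain ⟨b, hb⟩ := hI.forth m _ hfin h a
      rw [← range_sumElim_snoc] at hb
      exact (ih (by omega) _ _ hb).mpr (hy b)

theorem realize_formula_iff (hI : IsBackForth I) (φ : modalLang.Formula (Fin 1)) {m : ℕ}
    (hm : qr φ ≤ m) {a : M.W} {b : N.W} (h : I m {(a, b)}) :
    φ.Realize (fun _ => a) ↔ φ.Realize (fun _ => b) := by
  refine hI.realize_boundedFormula_iff φ hm _ _ default default ?_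
  convert h
  ext p
  simp [eq_comm]

end Kripke.IsBackForth

def List.consTree (α : Type*) : SimpleGraph (List α) :=
  SimpleGraph.fromRel fun s t => ∃ x, t = x :: s

namespace List.consTree

variable {α : Type*}

theorem adj_cons (s : List α) (x : α) : (consTree α).Adj s (x :: s) :=
  (SimpleGraph.fromRel_adj _ _ _).mpr ⟨(List.cons_ne_self x s).symm, Or.inl ⟨x, rfl⟩⟩

theorem connected : (consTree α).Connected := by
  refine (SimpleGraph.connected_iff_exists_forall_reachable _).mpr ⟨[], fun s => ?_⟩
  induction s with
  | nil => rfl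
  | cons x s ih => exact ih.trans (adj_cons s x).reachable

theorem length_le_length_add_dist (s t : List α) :
    t.length ≤ s.length + (consTree α).dist s t := by
  obtain ⟨p, hp⟩ := (connected.preconnected s t).exists_walk_length_eq_dist
  rw [← hp]
  clear hp
  induction p with
  | nil => simp
  | cons hadj p ih =>
    obtain ⟨-, ⟨x, rfl⟩ | ⟨x, rfl⟩⟩ := (SimpleGraph.fromRel_adj _ _ _).mp hadj
    all_goals simp only [SimpleGraph.Walk.length_cons, List.length_cons] at ih ⊢; omega

theorem ne_and_ne_cons_of_two_le_dist {s t : List α} (h : 2 ≤ (consTree α).dist s t) :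
    s ≠ t ∧ ∀ x, t ≠ x :: s := by
  refine ⟨fun hst => ?_, fun x hx => ?_⟩
  · rw [hst, SimpleGraph.dist_self] at h; omega
  · rw [hx, SimpleGraph.dist_eq_one_iff_adj.mpr (adj_cons s x)] at h; omega

end List.consTree

namespace Kripke

/-- `M.IsWalkFrom u l`: read backwards, `l` is a walk in `M` leaving `u`. -/
def IsWalkFrom (M : Kripke) (u : M.W) : List M.W → Prop
  | [] => True
  | x :: l => M.IsWalkFrom u l ∧ M.R (l.headD u) x

@[ext]
structure CopyWorld (M : Kripke) (u : M.W) (n : ℕ) where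
  comp : Bool × ℕ
  path : List M.W
  isWalkFrom : M.IsWalkFrom u path
  length_le : comp.1 = true → path.length ≤ n

/-- Countably many disjoint copies `(b, i)` of the unravelling of `M` at `u`, those with
`b = true` cut off at depth `n`. A world is a copy together with a walk from `u`. -/
def unravelCopies (M : Kripke) (u : M.W) (n : ℕ) : Kripke where
  W := CopyWorld M u n
  nonempty := ⟨⟨(false, 0), [], trivial, nofun⟩⟩
  R a b := a.comp = b.comp ∧ ∃ x, b.path = x :: a.path
  V p := {a | a.path.headD u ∈ M.V p}

variable {M : Kripke} {u : M.W} {n : ℕ}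

theorem unravelCopies.eq_iff {a b : (M.unravelCopies u n).W} :
    a = b ↔ a.comp = b.comp ∧ a.path = b.path :=
  CopyWorld.ext_iff

def unravelCopies.root (M : Kripke) (u : M.W) (n : ℕ) (b : Bool) : (M.unravelCopies u n).W :=
  ⟨(b, 0), [], trivial, fun _ => Nat.zero_le n⟩

theorem bisimilar_unravelCopies_root (σ : Set ℕ) (M : Kripke) (u : M.W) (n : ℕ) :
    Bisimilar σ M (M.unravelCopies u n) u (unravelCopies.root M u n false) := by
  refine ⟨fun w a => a.comp.1 = false ∧ a.path.headD u = w, ?_, rfl, rfl⟩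
  rintro w a ⟨ha, rfl⟩
  refine ⟨fun p _ => Iff.rfl, fun v hv => ?_, ?_⟩
  · let b : (M.unravelCopies u n).W :=
      ⟨a.comp, v :: a.path, ⟨a.isWalkFrom, hv⟩, by simp [ha]⟩
    exact ⟨b, ⟨rfl, v, rfl⟩, ha, rfl⟩
  · rintro b ⟨hcomp, x, hx⟩
    have hwalk : M.IsWalkFrom u (x :: a.path) := hx ▸ b.isWalkFrom
    exact ⟨x, hwalk.2, hcomp ▸ ha, by rw [hx]; rfl⟩

end Kripke

namespace Kripke.unravelCopies

variable {M : Kripke} {u : M.W} {n : ℕ}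

/-- The two sides may disagree on whether two pebbles share a copy only if the pebbles are too
far apart for `r` more rounds to notice. -/
def Coherent (r : ℕ) (p q : (M.unravelCopies u n).W × (M.unravelCopies u n).W) : Prop :=
  (p.1.comp = q.1.comp ↔ p.2.comp = q.2.comp) ∨
    2 ^ r < (List.consTree M.W).dist p.1.path q.1.path

/-- Duplicator's invariant with `r` rounds left. A world of a full copy may be matched with one of
a truncated copy only if the cut-off depth is out of reach in `r` rounds. -/
def GameInv (r : ℕ) (P : Set ((M.unravelCopies u n).W × (M.unravelCopies u n).W)) : Prop :=
  (∀ p ∈ P, p.1.path = p.2.path ∧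
      (p.1.comp.1 = p.2.comp.1 ∨ p.1.path.length + 2 ^ r ≤ n + 1)) ∧
    P.Pairwise (Coherent r)

variable {r : ℕ} {P : Set ((M.unravelCopies u n).W × (M.unravelCopies u n).W)}

theorem Coherent.symm {p q : (M.unravelCopies u n).W × (M.unravelCopies u n).W}
    (h : Coherent r p q) : Coherent r q p := by
  unfold Coherent at *
  rwa [eq_comm, @eq_comm _ q.2.comp, SimpleGraph.dist_comm]

theorem GameInv.coherent (h : GameInv r P) {p q} (hp : p ∈ P) (hq : q ∈ P) :
    Coherent r p q := by
  by_cases hpq : p = q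
  · exact hpq ▸ Or.inl (iff_of_true rfl rfl)
  · exact h.2 hp hq hpq

theorem GameInv.isPartialIso (h : GameInv r P) : IsPartialIso P := by
  refine ⟨fun p hp x => ?_, fun p hp q hq => ?_⟩
  · show p.1.path.headD u ∈ M.V x ↔ p.2.path.headD u ∈ M.V x
    rw [(h.1 p hp).1]
  · have hp' := (h.1 p hp).1
    have hq' := (h.1 q hq).1
    show (p.1 = q.1 ↔ p.2 = q.2) ∧
      (p.1.comp = q.1.comp ∧ (∃ x, q.1.path = x :: p.1.path) ↔
        p.2.comp = q.2.comp ∧ ∃ x, q.2.path = x :: p.2.path)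
    simp only [eq_iff]
    rcases h.coherent hp hq with hcomp | hfar
    · rw [hp', hq', hcomp]
      exact ⟨Iff.rfl, Iff.rfl⟩
    · have := List.consTree.ne_and_ne_cons_of_two_le_dist (Nat.one_le_two_pow.trans_lt hfar)
      rw [← hp', ← hq']
      simp [this.1, this.2]

theorem GameInv.mono {r' : ℕ} (h : GameInv r P) (hr : r' ≤ r) : GameInv r' P := by
  have hpow : 2 ^ r' ≤ 2 ^ r := Nat.pow_le_pow_right two_pos hr
  refine ⟨fun p hp => ?_, h.2.imp fun p q hpq => ?_⟩
  · obtain ⟨hpath, hcomp | hlen⟩ := h.1 p hp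
    exacts [⟨hpath, Or.inl hcomp⟩, ⟨hpath, Or.inr (by omega)⟩]
  · exact hpq.imp_right hpow.trans_lt

theorem GameInv.preimage_swap (h : GameInv r P) : GameInv r (Prod.swap ⁻¹' P) := by
  refine ⟨fun p hp => ?_, fun p hp q hq hpq => ?_⟩
  · obtain ⟨hpath, hcomp⟩ := h.1 _ hp
    exact ⟨hpath.symm, hpath ▸ hcomp.imp_left Eq.symm⟩
  · have hcoh : Coherent r p.swap q.swap := h.2 hp hq (Prod.swap_injective.ne hpq)
    have hp' : p.2.path = p.1.path := (h.1 _ hp).1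
    have hq' : q.2.path = q.1.path := (h.1 _ hq).1
    unfold Coherent at hcoh ⊢
    rwa [Prod.fst_swap, Prod.snd_swap, Prod.fst_swap, Prod.snd_swap, Iff.comm, hp', hq'] at hcoh

theorem GameInv.insert_of_coherent (h : GameInv (r + 1) P) {a b : (M.unravelCopies u n).W}
    (hab : a.path = b.path ∧ (a.comp.1 = b.comp.1 ∨ a.path.length + 2 ^ r ≤ n + 1))
    (hcoh : ∀ q ∈ P, Coherent r (a, b) q) : GameInv r (insert (a, b) P) :=
  ⟨Set.forall_mem_insert.mpr ⟨hab, (h.mono r.le_succ).1⟩,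
    Set.pairwise_insert.mpr
      ⟨(h.mono r.le_succ).2, fun q hq _ => ⟨hcoh q hq, (hcoh q hq).symm⟩⟩⟩

theorem GameInv.insert_of_near (h : GameInv (r + 1) P) {p} (hp : p ∈ P)
    {a : (M.unravelCopies u n).W} (hcomp : p.1.comp = a.comp)
    (hnear : (List.consTree M.W).dist p.1.path a.path ≤ 2 ^ r) :
    ∃ b, GameInv r (insert (a, b) P) := by
  obtain ⟨hpath, hkind⟩ := h.1 p hp
  have hlen := List.consTree.length_le_length_add_dist p.1.path a.path
  have hpow : 2 ^ (r + 1) = 2 ^ r + 2 ^ r := by ring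
  have hpos : 1 ≤ 2 ^ r := Nat.one_le_two_pow
  have hkind' : a.comp.1 = p.2.comp.1 ∨ a.path.length + 2 ^ r ≤ n + 1 := by
    rw [← hcomp]; exact hkind.imp_right fun h => by omega
  let b : (M.unravelCopies u n).W :=
    ⟨p.2.comp, a.path, a.isWalkFrom, fun htr => by
      rcases hkind' with hk | hk
      exacts [a.length_le (hk.trans htr), by omega]⟩
  refine ⟨b, h.insert_of_coherent ⟨rfl, hkind'⟩ fun q hq => ?_⟩
  rcases h.coherent hp hq with hsame | hfar
  · exact Or.inl (hcomp ▸ hsame)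
  · have := (List.consTree.connected (α := M.W)).dist_triangle (u := p.1.path) (v := a.path)
      (w := q.1.path)
    exact Or.inr (show 2 ^ r < (List.consTree M.W).dist a.path q.1.path by omega)

theorem GameInv.insert_of_far (h : GameInv (r + 1) P) (hP : P.Finite)
    {a : (M.unravelCopies u n).W}
    (hfar : ∀ p ∈ P, p.1.comp = a.comp → 2 ^ r < (List.consTree M.W).dist p.1.path a.path) :
    ∃ b, GameInv r (insert (a, b) P) := by
  obtain ⟨i, hi⟩ := (hP.image fun p => p.2.comp.2).exists_notMem
  let b : (M.unravelCopies u n).W := ⟨(a.comp.1, i), a.path, a.isWalkFrom, a.length_le⟩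
  refine ⟨b, h.insert_of_coherent ⟨rfl, Or.inl rfl⟩ fun q hq => ?_⟩
  have hfresh : b.comp ≠ q.2.comp := fun he => hi ⟨q, hq, by simp [← he, b]⟩
  by_cases hsame : a.comp = q.1.comp
  · exact Or.inr (SimpleGraph.dist_comm ▸ hfar q hq hsame.symm)
  · exact Or.inl (iff_of_false hsame hfresh)

theorem GameInv.forth (h : GameInv (r + 1) P) (hP : P.Finite) (a : (M.unravelCopies u n).W) :
    ∃ b, GameInv r (insert (a, b) P) := by
  by_cases hnear :
      ∃ p ∈ P, p.1.comp = a.comp ∧ (List.consTree M.W).dist p.1.path a.path ≤ 2 ^ r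
  · obtain ⟨p, hp, hcomp, hdist⟩ := hnear
    exact h.insert_of_near hp hcomp hdist
  · push Not at hnear
    exact h.insert_of_far hP hnear

theorem isBackForth_gameInv : IsBackForth (GameInv (M := M) (u := u) (n := n)) where
  isPartialIso _ _ h := h.isPartialIso
  forth _ _ hP h := h.forth hP
  back r P hP h b := by
    obtain ⟨a, ha⟩ := h.preimage_swap.forth (hP.preimage Prod.swap_injective.injOn) b
    refine ⟨a, ?_⟩
    convert ha.preimage_swap using 2
    ext ⟨x, y⟩
    simp [and_comm]

theorem gameInv_root (q : ℕ) :
    GameInv (u := u) (n := 2 ^ q - 1) q {(root M u _ false, root M u _ true)} :=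
  ⟨by simp [root, Nat.sub_add_cancel Nat.one_le_two_pow], Set.pairwise_singleton _ _⟩

theorem realize_root_iff (φ : modalLang.Formula (Fin 1)) {q : ℕ} (hq : qr φ ≤ q) :
    φ.Realize (fun _ => root M u (2 ^ q - 1) false) ↔
      φ.Realize (fun _ => root M u (2 ^ q - 1) true) :=
  isBackForth_gameInv.realize_formula_iff φ hq (gameInv_root q)

end Kripke.unravelCopies

namespace ML

def conj (L : List ML) : ML := L.foldr .and .top

def disj (L : List ML) : ML := .not (conj (L.map .not))

def box (φ : ML) : ML := .not (.dia (.not φ))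

variable {M : Kripke} {w : M.W}

theorem sat_conj {L : List ML} : ML.sat M w (conj L) ↔ ∀ φ ∈ L, ML.sat M w φ := by
  induction L with
  | nil => simp [conj, ML.sat]
  | cons φ L ih => exact (and_congr_right' ih).trans List.forall_mem_cons.symm

theorem sat_disj {L : List ML} : ML.sat M w (disj L) ↔ ∃ φ ∈ L, ML.sat M w φ := by
  simp [disj, ML.sat, sat_conj]

theorem sat_box {φ : ML} : ML.sat M w (box φ) ↔ ∀ v, M.R w v → ML.sat M v φ := by
  simp [box, ML.sat]

theorem depth_conj_le {L : List ML} {d : ℕ} (h : ∀ φ ∈ L, φ.depth ≤ d) :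
    (conj L).depth ≤ d := by
  induction L with
  | nil => simp [conj, depth]
  | cons φ L ih =>
    rw [List.forall_mem_cons] at h
    exact max_le h.1 (ih h.2)

theorem depth_disj_le {L : List ML} {d : ℕ} (h : ∀ φ ∈ L, φ.depth ≤ d) :
    (disj L).depth ≤ d :=
  depth_conj_le (by simpa [depth] using h)

end ML

/-- Hintikka types of depth `n` over the propositional variables in `σF`: the variables true at
a world, and, for `n > 0`, the set of depth-`(n - 1)` types of its successors. -/
def HType (σF : Finset ℕ) : ℕ → Type
  | 0 => Set σF
  | n + 1 => Set σF × Set (HType σF n)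

instance HType.finite (σF : Finset ℕ) : ∀ n, Finite (HType σF n)
  | 0 => inferInstanceAs (Finite (Set σF))
  | n + 1 => have := HType.finite σF n; inferInstanceAs (Finite (Set σF × Set (HType σF n)))

def Kripke.typeOf (M : Kripke) (σF : Finset ℕ) : (n : ℕ) → M.W → HType σF n
  | 0, w => {p | w ∈ M.V p}
  | n + 1, w => ({p | w ∈ M.V p}, {t | ∃ v, M.R w v ∧ M.typeOf σF n v = t})

def HType.atoms {σF : Finset ℕ} : {n : ℕ} → HType σF n → Set σF
  | 0, S => S
  | _ + 1, t => t.1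

theorem Kripke.atoms_typeOf {σF : Finset ℕ} (M : Kripke) (n : ℕ) (w : M.W) :
    (M.typeOf σF n w).atoms = {p : σF | w ∈ M.V p} := by
  cases n <;> rfl

open Classical in
noncomputable def HType.literals (σF : Finset ℕ) (S : Set σF) : ML :=
  ML.conj (σF.attach.toList.map fun p => if p ∈ S then .var p else .not (.var p))

noncomputable def HType.toML (σF : Finset ℕ) : (n : ℕ) → HType σF n → ML
  | 0, S => literals σF S
  | n + 1, (S, T) =>
    .and (literals σF S)
      (.and (ML.conj (T.toFinite.toFinset.toList.map fun t => .dia (toML σF n t)))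
        (ML.box (ML.disj (T.toFinite.toFinset.toList.map (toML σF n)))))

namespace HType

variable {σF : Finset ℕ}

theorem depth_literals (S : Set σF) : (literals σF S).depth = 0 := by
  refine Nat.le_zero.mp (ML.depth_conj_le fun φ hφ => ?_)
  simp only [List.mem_map] at hφ
  obtain ⟨p, -, rfl⟩ := hφ
  split <;> simp [ML.depth]

theorem depth_toML_le : ∀ (n : ℕ) (t : HType σF n), (toML σF n t).depth ≤ n
  | 0, S => (depth_literals S).le
  | n + 1, (S, T) => by
    simp only [toML, ML.depth, ML.box, depth_literals, zero_le, max_le_iff, true_and]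
    constructor
    · exact ML.depth_conj_le fun φ hφ => by
        obtain ⟨t, -, rfl⟩ := List.mem_map.mp hφ
        simpa [ML.depth] using depth_toML_le n t
    · simpa using ML.depth_disj_le fun φ hφ => by
        obtain ⟨t, -, rfl⟩ := List.mem_map.mp hφ
        exact depth_toML_le n t

theorem sat_literals {M : Kripke} {w : M.W} {S : Set σF} :
    ML.sat M w (literals σF S) ↔ {p : σF | w ∈ M.V p} = S := by
  classical
  simp only [literals, ML.sat_conj, List.forall_mem_map, Finset.mem_toList, Finset.mem_attach,
    forall_const, Set.ext_iff, Set.mem_ofPred_eq]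
  refine forall_congr' fun p => ?_
  by_cases hp : p ∈ S <;> simp [hp, ML.sat]

theorem sat_toML_iff {M : Kripke} : ∀ {n : ℕ} {w : M.W} {t : HType σF n},
    ML.sat M w (toML σF n t) ↔ M.typeOf σF n w = t
  | 0, _, _ => sat_literals
  | n + 1, w, (S, T) => by
    change _ ↔ ((_, _) : Set σF × Set (HType σF n)) = (S, T)
    simp only [toML, ML.sat, sat_literals, ML.sat_conj, ML.sat_box, ML.sat_disj,
      List.forall_mem_map, Prod.mk.injEq]
    simp only [List.mem_map, Finset.mem_toList, Set.Finite.mem_toFinset, exists_exists_and_eq_and,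
      sat_toML_iff, exists_eq_right']
    refine and_congr_right' ⟨fun ⟨hT, hR⟩ => ?_, ?_⟩
    · exact Set.ext fun t => ⟨fun ⟨v, hv, e⟩ => e ▸ hR v hv, hT t⟩
    · rintro rfl
      exact ⟨fun t ht => ht, fun v hv => ⟨v, hv, rfl⟩⟩

end HType

namespace Kripke

variable {K L : Kripke} {σF : Finset ℕ}

theorem exists_rel_typeOf_eq {e : ℕ} {w w' : K.W} {v : L.W}
    (h : K.typeOf σF (e + 1) w = L.typeOf σF (e + 1) v) (hw : K.R w w') :
    ∃ v', L.R v v' ∧ L.typeOf σF e v' = K.typeOf σF e w' := by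
  have hmem : K.typeOf σF e w' ∈ (K.typeOf σF (e + 1) w).2 := ⟨w', hw, rfl⟩
  rw [h] at hmem
  exact hmem

namespace unravelCopies

variable {a : K.W} {b : L.W} {n : ℕ}

-- `∀ e, d + e = n → …` says that the last worlds have the same depth-`(n - d)` type.
def TypeMatch (σF : Finset ℕ) (s : (K.unravelCopies a n).W) (t : (L.unravelCopies b n).W) :
    Prop :=
  s.comp.1 ∧ t.comp.1 ∧ s.path.length = t.path.length ∧
    ∀ e, s.path.length + e = n →
      K.typeOf σF e (s.path.headD a) = L.typeOf σF e (t.path.headD b)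

variable {s s' : (K.unravelCopies a n).W} {t : (L.unravelCopies b n).W}

theorem TypeMatch.symm (h : TypeMatch σF s t) : TypeMatch σF t s :=
  ⟨h.2.1, h.1, h.2.2.1.symm, fun e he => (h.2.2.2 e (h.2.2.1 ▸ he)).symm⟩

theorem TypeMatch.forth (h : TypeMatch σF s t) (hss' : (K.unravelCopies a n).R s s') :
    ∃ t', (L.unravelCopies b n).R t t' ∧ TypeMatch σF s' t' := by
  obtain ⟨hs, ht, hlen, htype⟩ := h
  obtain ⟨hcomp, x, hx⟩ := hss'
  have hs'len : s'.path.length ≤ n := s'.length_le (hcomp ▸ hs)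
  have hslen : s'.path.length = s.path.length + 1 := by rw [hx]; rfl
  obtain ⟨e, he⟩ : ∃ e, s.path.length + (e + 1) = n := ⟨n - s'.path.length, by omega⟩
  have hwalk : K.IsWalkFrom a (x :: s.path) := hx ▸ s'.isWalkFrom
  obtain ⟨y, hy, hyx⟩ := exists_rel_typeOf_eq (htype _ he) hwalk.2
  let t' : (L.unravelCopies b n).W :=
    ⟨t.comp, y :: t.path, ⟨t.isWalkFrom, hy⟩, fun _ => by
      simp only [List.length_cons]; omega⟩
  refine ⟨t', ⟨rfl, y, rfl⟩, hcomp ▸ hs, ht,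
    by simp only [t', hslen, hlen, List.length_cons], fun e' he' => ?_⟩
  obtain rfl : e' = e := by omega
  rw [hx]
  exact hyx.symm

theorem bisimilar_root_of_typeOf_eq (h : K.typeOf σF n a = L.typeOf σF n b) :
    Bisimilar σF (K.unravelCopies a n) (L.unravelCopies b n)
      (root K a n true) (root L b n true) := by
  refine ⟨TypeMatch σF, fun s t hst =>
    ⟨fun p hp => ?_, fun s' hs' => hst.forth hs', fun t' ht' => ?_⟩,
    ⟨rfl, rfl, rfl, fun e he => ?_⟩⟩
  · have hatoms := congrArg HType.atoms (hst.2.2.2 _ (Nat.add_sub_of_le (s.length_le hst.1)))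
    rw [atoms_typeOf, atoms_typeOf] at hatoms
    exact Set.ext_iff.mp hatoms ⟨p, hp⟩
  · obtain ⟨s', hs', hm⟩ := hst.symm.forth ht'
    exact ⟨s', hs', hm.symm⟩
  · obtain rfl : e = n := by simpa [root] using he
    exact h

end unravelCopies

end Kripke

theorem ML.realize_stAux {M : Kripke} (χ : ML) :
    ∀ {k : ℕ} (v : Empty → M.W) (xs : Fin (k + 1) → M.W),
      (χ.stAux k).Realize v xs ↔ ML.sat M (xs (Fin.last k)) χ := by
  induction χ with
  | top => exact fun _ _ => iff_of_true rfl trivial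
  | var p => exact fun _ _ => Iff.rfl
  | and φ ψ ihφ ihψ =>
    exact fun v xs => BoundedFormula.realize_inf.trans ((ihφ v xs).and (ihψ v xs))
  | not φ ih => exact fun v xs => BoundedFormula.realize_not.trans (ih v xs).not
  | dia φ ih =>
    intro k v xs
    refine BoundedFormula.realize_ex.trans (exists_congr fun x => ?_)
    rw [BoundedFormula.realize_inf, ih, Fin.snoc_last]
    refine and_congr_left' ?_
    show M.R (Fin.snoc (α := fun _ => M.W) xs x (Fin.last k).castSucc)
      (Fin.snoc (α := fun _ => M.W) xs x (Fin.last (k + 1))) ↔ _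
    rw [Fin.snoc_castSucc, Fin.snoc_last]

theorem ML.realize_st {M : Kripke} (χ : ML) (w : M.W) :
    (χ.st).Realize (fun _ => w) ↔ ML.sat M w χ := by
  rw [ML.st, Formula.realize_relabel, BoundedFormula.realize_toFormula]
  exact χ.realize_stAux _ _

def Kripke.ofStructure (A : Type) [modalLang.Structure A] [Nonempty A] : Kripke where
  W := A
  nonempty := inferInstance
  R x y := Structure.RelMap (L := modalLang) (show modalLang.Relations 2 from ()) ![x, y]
  V p := {x | Structure.RelMap (L := modalLang) (show modalLang.Relations 1 from p) ![x]}

def Kripke.ofStructureEquiv (A : Type) [modalLang.Structure A] [Nonempty A] :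
    modalLang.Equiv A (Kripke.ofStructure A).W where
  toEquiv := Equiv.refl A
  map_fun' f := f.elim
  map_rel' {l} r xs := by
    match l, r with
    | 1, p =>
      show Structure.RelMap (L := modalLang) (show modalLang.Relations 1 from p) ![xs 0] ↔ _
      rw [show ![xs 0] = xs from funext fun i => by fin_cases i; rfl]
    | 2, r =>
      show Structure.RelMap (L := modalLang) (show modalLang.Relations 2 from r) ![xs 0, xs 1] ↔ _
      rw [show ![xs 0, xs 1] = xs from funext fun i => by fin_cases i <;> rfl]

theorem unarySyms_finite {α : Type} {k : ℕ} (ψ : modalLang.BoundedFormula α k) :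
    (unarySyms ψ).Finite := by
  induction ψ with
  | falsum | equal => exact Set.finite_empty
  | @rel _ l r _ =>
    match l, r with
    | 1, p => exact Set.finite_singleton p
    | 2, _ => exact Set.finite_empty
  | imp _ _ ihf ihg => exact ihf.union ihg
  | all _ ih => exact ih

theorem HType.exists_ML_of_typeOf_invariant (σF : Finset ℕ) (n : ℕ)
    (Φ : (M : Kripke) → M.W → Prop)
    (hΦ : ∀ (K L : Kripke) (a : K.W) (b : L.W),
      K.typeOf σF n a = L.typeOf σF n b → (Φ K a ↔ Φ L b)) :
    ∃ χ : ML, χ.depth ≤ n ∧ ∀ (M : Kripke) (w : M.W), Φ M w ↔ ML.sat M w χ := by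
  let G : Set (HType σF n) := {t | ∃ (K : Kripke) (a : K.W), Φ K a ∧ K.typeOf σF n a = t}
  refine ⟨ML.disj (G.toFinite.toFinset.toList.map (toML σF n)),
    ML.depth_disj_le fun χ hχ => ?_, fun M w => ?_⟩
  · obtain ⟨t, -, rfl⟩ := List.mem_map.mp hχ
    exact depth_toML_le n t
  · simp only [ML.sat_disj, List.mem_map, Finset.mem_toList, Set.Finite.mem_toFinset,
      exists_exists_and_eq_and, sat_toML_iff, exists_eq_right', G, Set.mem_ofPred_eq]
    exact ⟨fun hw => ⟨M, w, hw, rfl⟩, fun ⟨K, a, ha, h⟩ => (hΦ K M a w h).mp ha⟩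

open Kripke.unravelCopies in
theorem realize_iff_of_typeOf_eq {φ : modalLang.Formula (Fin 1)} {q : ℕ} (hq : qr φ ≤ q)
    {σF : Finset ℕ}
    (hinv : ∀ (M₁ M₂ : Kripke) (u₁ : M₁.W) (u₂ : M₂.W), Bisimilar σF M₁ M₂ u₁ u₂ →
      (φ.Realize (fun _ => u₁) ↔ φ.Realize (fun _ => u₂)))
    {K L : Kripke} {a : K.W} {b : L.W}
    (h : K.typeOf σF (2 ^ q - 1) a = L.typeOf σF (2 ^ q - 1) b) :
    φ.Realize (fun _ => a) ↔ φ.Realize (fun _ => b) :=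
  calc φ.Realize (fun _ => a)
      ↔ φ.Realize (fun _ => root K a _ false) :=
        hinv _ _ _ _ (K.bisimilar_unravelCopies_root _ a _)
    _ ↔ φ.Realize (fun _ => root K a _ true) := realize_root_iff φ hq
    _ ↔ φ.Realize (fun _ => root L b _ true) := hinv _ _ _ _ (bisimilar_root_of_typeOf_eq h)
    _ ↔ φ.Realize (fun _ => root L b _ false) := (realize_root_iff φ hq).symm
    _ ↔ φ.Realize (fun _ => b) := (hinv _ _ _ _ (L.bisimilar_unravelCopies_root _ b _)).symm

/-- Otto's theorem: a bisimulation-invariant first-order formula of quantifier rank `q`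
is equivalent to the standard translation of a modal formula of modal depth `≤ 2^q - 1`. -/
theorem otto (φ : modalLang.Formula (Fin 1)) (q : ℕ) (hq : qr φ = q)
    (σ : Set ℕ) (hσ : σ = unarySyms φ)
    (hinv : ∀ (M₁ M₂ : Kripke) (u₁ : M₁.W) (u₂ : M₂.W),
      Bisimilar σ M₁ M₂ u₁ u₂ → (φ.Realize (fun _ => u₁) ↔ φ.Realize (fun _ => u₂))) :
    ∃ χ : ML, χ.depth ≤ 2 ^ q - 1 ∧
      ∀ (A : Type) [modalLang.Structure A] [Nonempty A] (a : A),
        φ.Realize (fun _ => a) ↔ (ML.st χ).Realize (fun _ => a) := by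
  obtain ⟨σF, rfl⟩ := (hσ ▸ unarySyms_finite φ : σ.Finite).exists_finset_coe
  obtain ⟨χ, hdepth, hχ⟩ := HType.exists_ML_of_typeOf_invariant σF (2 ^ q - 1)
    (fun K a => φ.Realize (fun _ => a)) fun _ _ _ _ h => realize_iff_of_typeOf_eq hq.le hinv h
  refine ⟨χ, hdepth, fun A _ _ a => ?_⟩
  let e := Kripke.ofStructureEquiv A
  calc φ.Realize (fun _ => a)
      ↔ φ.Realize (e ∘ fun _ => a) := (StrongHomClass.realize_formula e φ).symm
    _ ↔ ML.sat _ (e a) χ := hχ _ (e a)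
    _ ↔ (ML.st χ).Realize (e ∘ fun _ => a) := (χ.realize_st (e a)).symm
    _ ↔ (ML.st χ).Realize (fun _ => a) := StrongHomClass.realize_formula e _
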